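/- Let ((H_n, ξ_n)_{n∈ℕ∪{∞}}, M) be a Banach stacking in which every H_n is a real Hilbert space, and let Φ_n : H_n → (−∞,+∞]. Suppose there is λ > 0 such that for every n ∈ ℕ the function Φ_n is λ-convex, proper, and lower semicontinuous, and Φ_∞ is λ-convex and proper. Suppose further that (Φ_n)_{n∈ℕ} Γ-converges to Φ_∞ over the Banach stacking. Then there exists L ∈ ℝ such that Φ_n(x) ≥ L for every n ∈ ℕ ∪ {∞} and every x ∈ H_n. -/

import Mathlib

/-!
A `λ`-convex function with `λ > 0` that is `≥ A` on a ball of radius `δ` around a point where it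
is `≤ B` is bounded below everywhere by a constant depending only on `A`, `B`, `δ`, `λ`:
convexity along the segment from the centre to a far point `z` turns the local bound into a
minorant that is quadratic in `‖z - x₀‖`. Lower semicontinuity supplies such a ball for each
`Φ_n` separately. For a bound uniform in `n`, take a recovery sequence `x_n ⇾ y₀` at a point
where `Φ'` is finite: the liminf inequality forces `Φ_n ≥ Φ'(y₀) - 1` on balls of one fixed
radius around `x_n` for all large `n`, since otherwise a diagonal sequence `w_n ⇾ y₀` would
violate it. The bound on `Φ'` then follows from the recovery sequences.
-/

open Filter Topology

/-- `Φ` is `λ`-convex: `Φ(tx + (1−t)y) ≤ tΦ(x) + (1−t)Φ(y) − (λ/2)t(1−t)‖x−y‖²`. -/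
def LambdaConvex {H : Type*} [NormedAddCommGroup H] [NormedSpace ℝ H]
    (l : ℝ) (Φ : H → EReal) : Prop :=
  ∀ x y : H, ∀ t : ℝ, t ∈ Set.Icc (0 : ℝ) 1 →
    Φ (t • x + (1 - t) • y) ≤
      (t : EReal) * Φ x + ((1 - t : ℝ) : EReal) * Φ y
        - (((l / 2) * t * (1 - t) * ‖x - y‖ ^ 2 : ℝ) : EReal)

open Metric

namespace LambdaConvex

variable {H : Type*} [NormedAddCommGroup H] [NormedSpace ℝ H] {l : ℝ} {Φ : H → EReal}

theorem apply_le_of_le_coe (hΦ : LambdaConvex l Φ) {x y : H} {a b : ℝ} (hx : Φ x ≤ a)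
    (hy : Φ y ≤ b) {t : ℝ} (ht : t ∈ Set.Icc (0 : ℝ) 1) :
    Φ (t • x + (1 - t) • y) ≤
      ((t * a + (1 - t) * b - l / 2 * t * (1 - t) * ‖x - y‖ ^ 2 : ℝ) : EReal) := by
  have hta : (t : EReal) * Φ x ≤ ((t * a : ℝ) : EReal) := by
    rw [EReal.coe_mul]
    exact mul_le_mul_of_nonneg_left hx (by exact_mod_cast ht.1)
  have htb : ((1 - t : ℝ) : EReal) * Φ y ≤ (((1 - t) * b : ℝ) : EReal) := by
    rw [EReal.coe_mul]
    exact mul_le_mul_of_nonneg_left hy (by exact_mod_cast sub_nonneg.2 ht.2)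
  refine (hΦ x y t ht).trans ((EReal.sub_le_sub (add_le_add hta htb) le_rfl).trans ?_)
  norm_cast

theorem coe_le_of_forall_mem_closedBall (hl : 0 < l) (hΦ : LambdaConvex l Φ) {x₀ : H}
    {δ A B : ℝ} (hδ : 0 < δ) (hA : ∀ w ∈ closedBall x₀ δ, (A : EReal) ≤ Φ w) (hB : Φ x₀ ≤ B)
    (z : H) : ((B - ((B - A) / δ + l * δ / 2) ^ 2 / (2 * l) : ℝ) : EReal) ≤ Φ z := by
  have hAB : A ≤ B := by exact_mod_cast (hA x₀ (mem_closedBall_self hδ.le)).trans hB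
  set K := (B - A) / δ + l * δ / 2 with hKdef
  have hK : B - A ≤ K ^ 2 / (2 * l) := by
    rw [le_div_iff₀ (by positivity)]
    have : K ^ 2 = ((B - A) / δ - l * δ / 2) ^ 2 + (B - A) * (2 * l) := by
      rw [hKdef]; field_simp; ring
    nlinarith [sq_nonneg ((B - A) / δ - l * δ / 2)]
  by_contra! hz
  obtain ⟨a, hza, ha⟩ := EReal.lt_iff_exists_real_btwn.1 hz
  have ha : a < B - K ^ 2 / (2 * l) := by exact_mod_cast ha
  set d := ‖z - x₀‖
  rcases le_or_gt d δ with hd | hd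
  · have : A < a := by exact_mod_cast (hA z (mem_closedBall_iff_norm.2 hd)).trans_lt hza
    linarith
  · have hd0 : 0 < d := hδ.trans hd
    -- `t = δ / d` puts the convex combination of `z` and `x₀` on the boundary of the ball
    set t := δ / d
    have ht : t ∈ Set.Icc (0 : ℝ) 1 := ⟨by positivity, (div_le_one hd0).2 hd.le⟩
    have hw : t • z + (1 - t) • x₀ ∈ closedBall x₀ δ := by
      rw [mem_closedBall_iff_norm, show t • z + (1 - t) • x₀ - x₀ = t • (z - x₀) by module,
        norm_smul, Real.norm_of_nonneg ht.1, div_mul_cancel₀ _ hd0.ne']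
    have hconv := (hA _ hw).trans (hΦ.apply_le_of_le_coe hza.le hB ht)
    have key : A ≤ t * a + (1 - t) * B - l / 2 * t * (1 - t) * d ^ 2 := by exact_mod_cast hconv
    have hquad : B - K * d + l / 2 * d ^ 2 ≤ a := by
      have htd : t * d = δ := div_mul_cancel₀ _ hd0.ne'
      have key' : A * d ≤ δ * a + (d - δ) * B - l / 2 * δ * (d - δ) * d := by
        calc A * d ≤ (t * a + (1 - t) * B - l / 2 * t * (1 - t) * d ^ 2) * d :=
              mul_le_mul_of_nonneg_right key hd0.le
          _ = _ := by rw [← htd]; ring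
      have hKδ : δ * K * d = (B - A) * d + l * δ ^ 2 / 2 * d := by
        rw [hKdef]; field_simp
      have : δ * (B - K * d + l / 2 * d ^ 2) ≤ δ * a := by linarith
      exact le_of_mul_le_mul_left this hδ
    have hmin : K * d - l / 2 * d ^ 2 ≤ K ^ 2 / (2 * l) := by
      rw [le_div_iff₀ (by positivity)]
      nlinarith [sq_nonneg (l * d - K)]
    linarith

theorem exists_forall_coe_le (hl : 0 < l) (hΦ : LambdaConvex l Φ) (hlsc : LowerSemicontinuous Φ)
    (hbot : ∀ x, Φ x ≠ ⊥) (hproper : ∃ x, Φ x ≠ ⊤) : ∃ m : ℝ, ∀ z, (m : EReal) ≤ Φ z := by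
  obtain ⟨x₀, hx₀⟩ := hproper
  have hc : Φ x₀ = ((Φ x₀).toReal : EReal) := (EReal.coe_toReal hx₀ (hbot x₀)).symm
  have hlt : (((Φ x₀).toReal - 1 : ℝ) : EReal) < Φ x₀ := by
    rw [hc]; exact_mod_cast sub_one_lt _
  obtain ⟨δ, hδ, hball⟩ := nhds_basis_closedBall.eventually_iff.1 (hlsc x₀ _ hlt)
  exact ⟨_, hΦ.coe_le_of_forall_mem_closedBall hl hδ (fun w hw => (hball hw).le) hc.le⟩

end LambdaConvex

theorem exists_tendsto_dist_zero_frequently {X : ℕ → Type*} [∀ n, PseudoMetricSpace (X n)]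
    {x : ∀ n, X n} {P : ∀ n, X n → Prop}
    (h : ∀ δ > 0, ∃ᶠ n in atTop, ∃ w ∈ closedBall (x n) δ, P n w) :
    ∃ w : ∀ n, X n, Tendsto (fun n => dist (w n) (x n)) atTop (𝓝 0) ∧
      ∃ᶠ n in atTop, P n (w n) := by
  obtain ⟨φ, hφ, hφP⟩ := extraction_forall_of_frequently fun k : ℕ =>
    h (1 / (k + 1)) Nat.one_div_pos_of_nat
  have hw : ∀ n, ∃ w : X n, (∀ K, φ K ≤ n → dist w (x n) ≤ 1 / (K + 1)) ∧
      ∀ k, φ k = n → P n w := by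
    intro n
    by_cases hn : ∃ k, φ k = n
    · obtain ⟨k, rfl⟩ := hn
      obtain ⟨w, hwx, hwP⟩ := hφP k
      refine ⟨w, fun K hK => hwx.trans ?_, fun k' hk' => hφ.injective hk' ▸ hwP⟩
      gcongr
      exact hφ.le_iff_le.1 hK
    · refine ⟨x n, fun K _ => by rw [dist_self]; positivity, fun k hk => (hn ⟨k, hk⟩).elim⟩
  choose w hwx hwP using hw
  refine ⟨w, Metric.tendsto_atTop.2 fun ε hε => ?_, frequently_atTop.2 fun N =>
    ⟨φ N, hφ.id_le N, hwP _ N rfl⟩⟩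
  obtain ⟨K, hK⟩ := exists_nat_one_div_lt hε
  refine ⟨φ K, fun n hn => ?_⟩
  rw [Real.dist_0_eq_abs, abs_of_nonneg dist_nonneg]
  exact (hwx n K hn).trans_lt hK

theorem exists_uniform_closedBall_le_of_le_liminf {M : Type*} [PseudoMetricSpace M]
    {X : ℕ → Type*} [∀ n, PseudoMetricSpace (X n)] {ξ : ∀ n, X n → M}
    (hξ : ∀ n, LipschitzWith 1 (ξ n)) {Φ : ∀ n, X n → EReal} {p : M} {c : EReal}
    (hliminf : ∀ w : ∀ n, X n, Tendsto (fun n => ξ n (w n)) atTop (𝓝 p) →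
      c ≤ liminf (fun n => Φ n (w n)) atTop)
    {x : ∀ n, X n} (hx : Tendsto (fun n => ξ n (x n)) atTop (𝓝 p)) {a : EReal} (ha : a < c) :
    ∃ δ > 0, ∀ᶠ n in atTop, ∀ w ∈ closedBall (x n) δ, a ≤ Φ n w := by
  by_contra! h
  obtain ⟨w, hwx, hwΦ⟩ := exists_tendsto_dist_zero_frequently h
  have hw : Tendsto (fun n => ξ n (w n)) atTop (𝓝 p) := by
    rw [tendsto_iff_dist_tendsto_zero] at hx ⊢
    refine squeeze_zero (fun _ => dist_nonneg) (fun n => ?_) (by simpa using hwx.add hx)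
    calc dist (ξ n (w n)) p ≤ dist (ξ n (w n)) (ξ n (x n)) + dist (ξ n (x n)) p :=
          dist_triangle _ _ _
      _ ≤ dist (w n) (x n) + dist (ξ n (x n)) p := by
        gcongr; simpa using (hξ n).dist_le_mul (w n) (x n)
  exact ha.not_ge <|
    (hliminf w hw).trans (liminf_le_of_frequently_le' (hwΦ.mono fun _ => le_of_lt))

theorem exists_forall_coe_le_of_eventually {X : ℕ → Type*} {Φ : ∀ n, X n → EReal}
    (h : ∀ n, ∃ m : ℝ, ∀ x, (m : EReal) ≤ Φ n x) {L : ℝ}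
    (hL : ∀ᶠ n in atTop, ∀ x, (L : EReal) ≤ Φ n x) : ∃ L' : ℝ, ∀ n x, (L' : EReal) ≤ Φ n x := by
  choose m hm using h
  obtain ⟨N, hN⟩ := eventually_atTop.1 hL
  obtain ⟨b, hb⟩ := ((Set.finite_Iio N).image m).bddBelow
  refine ⟨min L b, fun n x => ?_⟩
  rcases lt_or_ge n N with hn | hn
  · exact (EReal.coe_le_coe_iff.2 ((min_le_right _ _).trans (hb ⟨n, hn, rfl⟩))).trans (hm n x)
  · exact (EReal.coe_le_coe_iff.2 (min_le_left _ _)).trans (hN n hn x)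

theorem banachStacking_uniform_lower_bound_general
    {M : Type*} [MetricSpace M]
    {X : ℕ → Type*} [∀ n, NormedAddCommGroup (X n)] [∀ n, InnerProductSpace ℝ (X n)]
    {Y : Type*}
    (ξ : ∀ n, X n → M) (ξ' : Y → M)
    -- Banach stacking, condition (i): the embeddings are 1-Lipschitz
    (hlip : ∀ n, LipschitzWith 1 (ξ n))
    -- the functionals, taking values in (−∞,+∞]
    (Φ : ∀ n, X n → EReal) (Φ' : Y → EReal)
    (hbot : ∀ n x, Φ n x ≠ ⊥) (hbot' : ∀ y, Φ' y ≠ ⊥)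
    -- the convexity and regularity assumptions, with a single λ > 0
    (l : ℝ) (hl : 0 < l)
    (hconv : ∀ n, LambdaConvex l (Φ n))
    (hproper : ∀ n, ∃ x, Φ n x ≠ ⊤) (hproper' : ∃ y, Φ' y ≠ ⊤)
    (hlsc : ∀ n, LowerSemicontinuous (Φ n))
    -- Γ-convergence over the stacking: liminf inequality and recovery sequences
    (hliminf : ∀ (x : ∀ n, X n) (y : Y),
      Tendsto (fun n => ξ n (x n)) atTop (𝓝 (ξ' y)) →
      Φ' y ≤ liminf (fun n => Φ n (x n)) atTop)
    (hrec : ∀ y : Y, ∃ x : ∀ n, X n,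
      Tendsto (fun n => ξ n (x n)) atTop (𝓝 (ξ' y)) ∧
      limsup (fun n => Φ n (x n)) atTop ≤ Φ' y) :
    ∃ L : ℝ, (∀ n, ∀ x : X n, (L : EReal) ≤ Φ n x) ∧ ∀ y : Y, (L : EReal) ≤ Φ' y := by
  obtain ⟨L, hL⟩ : ∃ L : ℝ, ∀ n (x : X n), (L : EReal) ≤ Φ n x := by
    obtain ⟨y₀, hy₀⟩ := hproper'
    set c := (Φ' y₀).toReal
    have hc : Φ' y₀ = c := (EReal.coe_toReal hy₀ (hbot' y₀)).symm
    obtain ⟨x, hx, hxrec⟩ := hrec y₀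
    have hxB : ∀ᶠ n in atTop, Φ n (x n) ≤ ((c + 1 : ℝ) : EReal) :=
      (eventually_lt_of_limsup_lt (hxrec.trans_lt (by rw [hc]; exact_mod_cast lt_add_one c))).mono
        fun _ => le_of_lt
    obtain ⟨δ, hδ, hball⟩ := exists_uniform_closedBall_le_of_le_liminf hlip (hliminf · y₀) hx
      (a := ((c - 1 : ℝ) : EReal)) (by rw [hc]; exact_mod_cast sub_one_lt c)
    exact exists_forall_coe_le_of_eventually
      (fun n => (hconv n).exists_forall_coe_le hl (hlsc n) (hbot n) (hproper n))
      ((hball.and hxB).mono fun n hn => (hconv n).coe_le_of_forall_mem_closedBall hl hδ hn.1 hn.2)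
  refine ⟨L, hL, fun y => ?_⟩
  obtain ⟨x, -, hxrec⟩ := hrec y
  exact (le_limsup_of_frequently_le' (Frequently.of_forall fun n => hL n (x n))).trans hxrec

/-- Over a Banach stacking of real Hilbert spaces, if there is `λ > 0` such
that all `Φ_n` (`n ∈ ℕ`) are `λ`-convex, proper and lower semicontinuous, `Φ'` is `λ`-convex
and proper, and `(Φ_n)_{n∈ℕ}` Γ-converges to `Φ'` over the stacking, then the `Φ_n`
(`n ∈ ℕ ∪ {∞}`) are uniformly bounded below. -/
theorem banachStacking_uniform_lower_bound
    {M : Type*} [MetricSpace M]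
    {X : ℕ → Type*} [∀ n, NormedAddCommGroup (X n)] [∀ n, InnerProductSpace ℝ (X n)]
    [∀ n, CompleteSpace (X n)]
    {Y : Type*} [NormedAddCommGroup Y] [InnerProductSpace ℝ Y] [CompleteSpace Y]
    (ξ : ∀ n, X n → M) (ξ' : Y → M)
    -- Banach stacking, condition (i): the embeddings are 1-Lipschitz
    (hlip : ∀ n, LipschitzWith 1 (ξ n)) (hlip' : LipschitzWith 1 ξ')
    -- condition (ii): every element of the limit space is approximated by some sequence
    (hdense : ∀ y : Y, ∃ x : ∀ n, X n,
      Tendsto (fun n => ξ n (x n)) atTop (𝓝 (ξ' y)))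
    -- condition (iii): addition and scaling are continuous over the stacking
    (hadd : ∀ (x x' : ∀ n, X n) (y y' : Y),
      Tendsto (fun n => ξ n (x n)) atTop (𝓝 (ξ' y)) →
      Tendsto (fun n => ξ n (x' n)) atTop (𝓝 (ξ' y')) →
      Tendsto (fun n => ξ n (x n + x' n)) atTop (𝓝 (ξ' (y + y'))))
    (hsmul : ∀ (c : ℝ) (x : ∀ n, X n) (y : Y),
      Tendsto (fun n => ξ n (x n)) atTop (𝓝 (ξ' y)) →
      Tendsto (fun n => ξ n (c • x n)) atTop (𝓝 (ξ' (c • y))))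
    -- condition (iv): the norms are continuous over the stacking
    (hnorm : ∀ (x : ∀ n, X n) (y : Y),
      Tendsto (fun n => ξ n (x n)) atTop (𝓝 (ξ' y)) →
      Tendsto (fun n => ‖x n‖) atTop (𝓝 ‖y‖))
    -- the functionals, taking values in (−∞,+∞]
    (Φ : ∀ n, X n → EReal) (Φ' : Y → EReal)
    (hbot : ∀ n x, Φ n x ≠ ⊥) (hbot' : ∀ y, Φ' y ≠ ⊥)
    -- the convexity and regularity assumptions, with a single λ > 0
    (l : ℝ) (hl : 0 < l)
    (hconv : ∀ n, LambdaConvex l (Φ n)) (hconv' : LambdaConvex l Φ')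
    (hproper : ∀ n, ∃ x, Φ n x ≠ ⊤) (hproper' : ∃ y, Φ' y ≠ ⊤)
    (hlsc : ∀ n, LowerSemicontinuous (Φ n))
    -- Γ-convergence over the stacking: liminf inequality and recovery sequences
    (hliminf : ∀ (x : ∀ n, X n) (y : Y),
      Tendsto (fun n => ξ n (x n)) atTop (𝓝 (ξ' y)) →
      Φ' y ≤ liminf (fun n => Φ n (x n)) atTop)
    (hrec : ∀ y : Y, ∃ x : ∀ n, X n,
      Tendsto (fun n => ξ n (x n)) atTop (𝓝 (ξ' y)) ∧
      limsup (fun n => Φ n (x n)) atTop ≤ Φ' y) :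
    ∃ L : ℝ, (∀ n, ∀ x : X n, (L : EReal) ≤ Φ n x) ∧ ∀ y : Y, (L : EReal) ≤ Φ' y :=
  banachStacking_uniform_lower_bound_general ξ ξ' hlip Φ Φ' hbot hbot' l hl hconv hproper hproper'
    hlsc hliminf hrec
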